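/- arXiv:2101.02081 — 2 statements merged into one kernel-verified Lean document; each statement's English description precedes it below -/
import Mathlib

section
/- Let m < 0 and let r*(r) be a function satisfying r*(r) = r + 2m log(r/R₀) + O(log²(r/R₀)/r) as r → ∞, and let A, B be as above (A = 1 - 2m/r + Gm²/r², B = 1 + 2m/r + m²/r²). Then (B(r)/A(r))·(r²/r*(r)²) = 1 + 4m/r - 4m log(r/R₀)/r + O(log²(r/R₀)/r²), and in particular there exists R₂ > 0 such that (B(r)/A(r))·(r²/r*(r)²) > 1 for all r ≥ R₂. -/
open Real Filter Topology Asymptotics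

/-!
Write `L = log (r / R₀)` and `δ = L / r`; every error term is `O(δ²)`. The hypothesis on `r*`
says `u = r* / r - 1 = 2mδ + O(δ²)`, so `r² / r*² = (1 + u)⁻² = 1 - 2u + O(u²) = 1 - 4mδ + O(δ²)`,
while `B / A = 1 + 4m / r + O(r⁻²)`. Multiplying the two expansions gives the first claim.
For the second, `B/A · r²/r*² - 1 = -4mδ + o(δ)` because `r⁻¹ = o(δ)` (as `L → ∞`) and
`δ² = o(δ)`; since `-4m > 0` this is eventually positive.
-/

section Expansions

variable {α : Type*} {l : Filter α}

lemma isBigO_inv_one_add_sq_sub {u : α → ℝ} (hu : Tendsto u l (𝓝 0)) :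
    (fun x => ((1 + u x) ^ 2)⁻¹ - (1 - 2 * u x)) =O[l] fun x => u x ^ 2 := by
  have hv : Tendsto (fun x => 1 + u x) l (𝓝 (1 + 0)) := tendsto_const_nhds.add hu
  -- `(1 + u)⁻² - (1 - 2u) = u² (3 + 2u) / (1 + u)²`
  have hq : Tendsto (fun x => (3 + 2 * u x) / (1 + u x) ^ 2) l (𝓝 ((3 + 2 * 0) / (1 + 0) ^ 2)) :=
    (tendsto_const_nhds.add (hu.const_mul 2)).div (hv.pow 2) (by norm_num)
  refine ((isBigO_refl (fun x => u x ^ 2) l).mul (hq.isBigO_one ℝ)).congr' ?_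
    (.of_forall fun x => mul_one _)
  filter_upwards [hv.eventually_ne (by norm_num : (1 : ℝ) + 0 ≠ 0)] with x hx
  field_simp
  ring

lemma isBigO_mul_sub_one_add_add {X Y a b e : α → ℝ} (he : e =O[l] fun _ => (1 : ℝ))
    (ha : a =O[l] e) (hb : b =O[l] e)
    (hX : (fun x => X x - (1 + a x)) =O[l] fun x => e x ^ 2)
    (hY : (fun x => Y x - (1 + b x)) =O[l] fun x => e x ^ 2) :
    (fun x => X x * Y x - (1 + a x + b x)) =O[l] fun x => e x ^ 2 := by
  have h1 : (fun _ => (1 : ℝ)) =O[l] fun _ => (1 : ℝ) := isBigO_refl _ _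
  have he2 : (fun x => e x ^ 2) =O[l] fun _ => (1 : ℝ) :=
    (he.pow 2).congr_right fun _ => one_pow 2
  have hY1 : Y =O[l] fun _ => (1 : ℝ) :=
    ((hY.trans he2).add (h1.add (hb.trans he))).congr_left fun x => by ring
  have h1a : (fun x => 1 + a x) =O[l] fun _ => (1 : ℝ) := h1.add (ha.trans he)
  -- `XY - (1 + a + b) = (X - (1 + a)) Y + (1 + a) (Y - (1 + b)) + ab`
  have hXY := (hX.mul hY1).congr_right fun x => mul_one (e x ^ 2)
  have haY := (h1a.mul hY).congr_right fun x => one_mul (e x ^ 2)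
  have hab := (ha.mul hb).congr_right fun x => (sq (e x)).symm
  exact ((hXY.add haY).add hab).congr_left fun x => by ring

lemma eventually_pos_of_isLittleO_sub_const_mul {f g : α → ℝ} {c : ℝ} (hc : 0 < c)
    (hg : ∀ᶠ x in l, 0 < g x) (h : (fun x => f x - c * g x) =o[l] g) : ∀ᶠ x in l, 0 < f x := by
  filter_upwards [h.def (half_pos hc), hg] with x hx hgx
  rw [norm_of_nonneg hgx.le, Real.norm_eq_abs] at hx
  linarith [neg_abs_le (f x - c * g x), mul_pos hc hgx]

end Expansions

lemma exists_pos_forall_ge_of_eventually_atTop {p : ℝ → Prop} (h : ∀ᶠ r in atTop, p r) :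
    ∃ R, 0 < R ∧ ∀ r, R ≤ r → p r := by
  obtain ⟨R, hR⟩ := eventually_atTop.1 h
  exact ⟨max R 1, by positivity, fun r hr => hR r (le_of_max_le_left hr)⟩

section LogScale

variable {R₀ : ℝ}

lemma tendsto_log_div_const_atTop (hR₀ : 0 < R₀) :
    Tendsto (fun r => log (r / R₀)) atTop atTop :=
  tendsto_log_atTop.comp (tendsto_id.atTop_div_const hR₀)

lemma tendsto_log_div_const_div_self (hR₀ : 0 < R₀) :
    Tendsto (fun r => log (r / R₀) / r) atTop (𝓝 0) := by
  have h : (fun r => log (r / R₀)) =o[atTop] fun r => r / R₀ :=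
    isLittleO_log_id_atTop.comp_tendsto (tendsto_id.atTop_div_const hR₀)
  exact (h.trans_isBigO ((isBigO_const_mul_self R₀⁻¹ id atTop).congr_left
    fun r => inv_mul_eq_div R₀ r)).tendsto_div_nhds_zero

lemma isLittleO_inv_log_div_const_div_self (hR₀ : 0 < R₀) :
    (fun r : ℝ => r⁻¹) =o[atTop] fun r => log (r / R₀) / r := by
  have h : (fun _ => (1 : ℝ)) =o[atTop] fun r => log (r / R₀) :=
    (isLittleO_one_left_iff ℝ).2
      (tendsto_norm_atTop_atTop.comp (tendsto_log_div_const_atTop hR₀))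
  simpa only [div_eq_mul_inv, one_mul] using
    h.mul_isBigO (isBigO_refl (fun r : ℝ => r⁻¹) atTop)

lemma isLittleO_sq_log_div_const_div_self (hR₀ : 0 < R₀) :
    (fun r => (log (r / R₀) / r) ^ 2) =o[atTop] fun r => log (r / R₀) / r :=
  (isLittleO_pow_id one_lt_two).comp_tendsto (tendsto_log_div_const_div_self hR₀)

end LogScale

lemma isBigO_metric_ratio_sub (m G : ℝ) :
    (fun r : ℝ => (1 + 2 * m / r + m ^ 2 / r ^ 2) / (1 - 2 * m / r + G * m ^ 2 / r ^ 2)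
      - (1 + 4 * m / r)) =O[atTop] fun r => r⁻¹ ^ 2 := by
  have hx : ∀ c : ℝ, Tendsto (fun r : ℝ => c / r) atTop (𝓝 0) :=
    fun c => tendsto_const_nhds.div_atTop tendsto_id
  have hx2 : ∀ c : ℝ, Tendsto (fun r : ℝ => c / r ^ 2) atTop (𝓝 0) :=
    fun c => tendsto_const_nhds.div_atTop (tendsto_pow_atTop two_ne_zero)
  have hA : Tendsto (fun r : ℝ => 1 - 2 * m / r + G * m ^ 2 / r ^ 2) atTop (𝓝 (1 - 0 + 0)) :=
    (tendsto_const_nhds.sub (hx _)).add (hx2 _)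
  have hA1 : (1 : ℝ) - 0 + 0 ≠ 0 := by norm_num
  -- `B - (1 + 4m/r) A = r⁻² ((9 - G) m² - 4 G m³ / r)`
  have hq : Tendsto (fun r : ℝ => ((9 - G) * m ^ 2 - 4 * G * m ^ 3 / r) /
      (1 - 2 * m / r + G * m ^ 2 / r ^ 2)) atTop _ :=
    (tendsto_const_nhds.sub (hx _)).div hA hA1
  refine ((isBigO_refl (fun r : ℝ => r⁻¹ ^ 2) atTop).mul (hq.isBigO_one ℝ)).congr' ?_
    (.of_forall fun r => mul_one _)
  filter_upwards [hA.eventually_ne hA1] with r hA_ne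
  rw [div_sub' hA_ne, mul_div_assoc']
  congr 1
  ring

noncomputable def angularCoefficient (m G : ℝ) (rstar : ℝ → ℝ) (r : ℝ) : ℝ :=
  (1 + 2 * m / r + m ^ 2 / r ^ 2) / (1 - 2 * m / r + G * m ^ 2 / r ^ 2) * (r ^ 2 / rstar r ^ 2)

section Expansion

variable {m R₀ : ℝ} {rstar : ℝ → ℝ}

lemma isBigO_sq_div_rstar_sq_sub (hR₀ : 0 < R₀)
    (h : (fun r => rstar r - r - 2 * m * log (r / R₀)) =O[atTop]
      fun r => log (r / R₀) ^ 2 / r) :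
    (fun r => r ^ 2 / rstar r ^ 2 - (1 + -4 * m * (log (r / R₀) / r))) =O[atTop]
      fun r => (log (r / R₀) / r) ^ 2 := by
  set δ : ℝ → ℝ := fun r => log (r / R₀) / r
  set u : ℝ → ℝ := fun r => rstar r / r - 1
  have hδ : Tendsto δ atTop (𝓝 0) := tendsto_log_div_const_div_self hR₀
  have hu_sub : (fun r => u r - 2 * m * δ r) =O[atTop] fun r => δ r ^ 2 := by
    refine (h.mul (isBigO_refl (fun r : ℝ => r⁻¹) atTop)).congr' ?_ (.of_forall fun r => ?_)
    · filter_upwards [eventually_ne_atTop 0] with r hr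
      simp only [u, δ]
      field_simp
    · simp only [δ]
      ring
  have hu : u =O[atTop] δ :=
    ((hu_sub.trans (isLittleO_sq_log_div_const_div_self hR₀).isBigO).add
      ((isBigO_refl δ atTop).const_mul_left (2 * m))).congr_left fun r => by ring
  have hY := (isBigO_inv_one_add_sq_sub (hu.trans_tendsto hδ)).trans (hu.pow 2)
  refine (hY.sub (hu_sub.const_mul_left 2)).congr_left fun r => ?_
  simp only [u, δ, add_sub_cancel, div_pow, inv_div]
  ring

lemma isBigO_angularCoefficient_sub (G : ℝ) (hR₀ : 0 < R₀)
    (h : (fun r => rstar r - r - 2 * m * log (r / R₀)) =O[atTop]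
      fun r => log (r / R₀) ^ 2 / r) :
    (fun r => angularCoefficient m G rstar r - (1 + 4 * m / r - 4 * m * log (r / R₀) / r))
      =O[atTop] fun r => (log (r / R₀) / r) ^ 2 := by
  have hinv := (isLittleO_inv_log_div_const_div_self hR₀).isBigO
  have ha : (fun r => 4 * m / r) =O[atTop] fun r => log (r / R₀) / r :=
    (hinv.const_mul_left (4 * m)).congr_left fun r => (div_eq_mul_inv _ _).symm
  refine (isBigO_mul_sub_one_add_add ((tendsto_log_div_const_div_self hR₀).isBigO_one ℝ) ha
    ((isBigO_refl _ _).const_mul_left (-4 * m))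
    ((isBigO_metric_ratio_sub m G).trans (hinv.pow 2))
    (isBigO_sq_div_rstar_sq_sub hR₀ h)).congr_left fun r => ?_
  simp only [angularCoefficient]
  ring

lemma eventually_one_lt_of_isBigO_sub (hm : m < 0) (hR₀ : 0 < R₀) {P : ℝ → ℝ}
    (hP : (fun r => P r - (1 + 4 * m / r - 4 * m * log (r / R₀) / r)) =O[atTop]
      fun r => (log (r / R₀) / r) ^ 2) :
    ∀ᶠ r in atTop, 1 < P r := by
  have hδ_pos : ∀ᶠ r in atTop, 0 < log (r / R₀) / r :=
    ((tendsto_log_div_const_atTop hR₀).eventually_gt_atTop 0).and (eventually_gt_atTop 0)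
      |>.mono fun r h => div_pos h.1 h.2
  have hsub := (hP.trans_isLittleO (isLittleO_sq_log_div_const_div_self hR₀)).add
    ((isLittleO_inv_log_div_const_div_self hR₀).const_mul_left (4 * m))
  have hpos := eventually_pos_of_isLittleO_sub_const_mul (f := fun r => P r - 1)
    (c := -(4 * m)) (by linarith) hδ_pos (hsub.congr_left fun r => by ring)
  exact hpos.mono fun r hr => sub_pos.1 hr

end Expansion

/-- Proposition 3.3 of the paper in analytic form: for negative mass the angular
coefficient `(B/A)(r²/r*²)` of the compactified metric expands as
`1 + 4m/r - 4m log(r/R₀)/r + O(log²(r/R₀)/r²)` and is eventually `> 1`. -/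
theorem angular_coefficient_exceeds_one (m G R₀ : ℝ) (hm : m < 0) (hR₀ : 0 < R₀)
    (A B : ℝ → ℝ)
    (hA : ∀ r, A r = 1 - 2 * m / r + G * m ^ 2 / r ^ 2)
    (hB : ∀ r, B r = 1 + 2 * m / r + m ^ 2 / r ^ 2)
    (rstar : ℝ → ℝ)
    (hrstar : ∃ C R : ℝ, 0 < C ∧ 0 < R ∧ ∀ r, R ≤ r →
      |rstar r - r - 2 * m * Real.log (r / R₀)| ≤ C * (Real.log (r / R₀)) ^ 2 / r) :
    (∃ C' R' : ℝ, 0 < C' ∧ 0 < R' ∧ ∀ r, R' ≤ r →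
      |B r / A r * (r ^ 2 / (rstar r) ^ 2)
        - (1 + 4 * m / r - 4 * m * Real.log (r / R₀) / r)|
        ≤ C' * (Real.log (r / R₀)) ^ 2 / r ^ 2) ∧
    (∃ R₂ : ℝ, 0 < R₂ ∧ ∀ r, R₂ ≤ r →
      1 < B r / A r * (r ^ 2 / (rstar r) ^ 2)) := by
  have hAB : ∀ r, B r / A r * (r ^ 2 / rstar r ^ 2) = angularCoefficient m G rstar r :=
    fun r => by rw [hA, hB, angularCoefficient]
  simp only [hAB]
  obtain ⟨C, R, hC, -, hCR⟩ := hrstar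
  have hO : (fun r => rstar r - r - 2 * m * log (r / R₀)) =O[atTop]
      fun r => log (r / R₀) ^ 2 / r :=
    .of_bound C <| eventually_atTop.2 ⟨R, fun r hr => (hCR r hr).trans <| by
      rw [mul_div_assoc, Real.norm_eq_abs]
      exact mul_le_mul_of_nonneg_left (le_abs_self _) hC.le⟩
  have hexp := isBigO_angularCoefficient_sub G hR₀ hO
  refine ⟨?_, exists_pos_forall_ge_of_eventually_atTop
    (eventually_one_lt_of_isBigO_sub hm hR₀ hexp)⟩
  obtain ⟨C', hC', hbound⟩ := hexp.exists_pos
  obtain ⟨R', hR', h⟩ := exists_pos_forall_ge_of_eventually_atTop hbound.bound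
  refine ⟨C', R', hC', hR', fun r hr => (h r hr).trans_eq ?_⟩
  rw [Real.norm_eq_abs, abs_of_nonneg (sq_nonneg _), div_pow, mul_div_assoc]
end

section
/- In Minkowski space ℝ^{1,3} with metric dt² - dr² - r²(dθ² + sin²θ dφ²), consider two points p, q whose angular coordinates are antipodal on the sphere (angular distance π). Any causal curve from p to q satisfies t(q) - t(p) ≥ r(p) + r(q), with equality only for a null geodesic passing through the spatial origin or reaching infinity; equivalently, a point p′ on past null infinity can be connected by causal curves through Minkowski space only to points on future null infinity at or to the future of the antipodal point q′. -/
/-!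
For a vector `e` with `‖e‖ ≤ 1`, the function `γt - ⟪e, γx⟫` is nondecreasing along a
causal curve, since its derivative is at least `γt' - ‖γx'‖ ≥ 0`. Taking `e` in the direction
of a displacement gives `‖γx t - γx s‖ ≤ γt t - γt s`, and between the antipodal endpoints the
displacement has length `rp + rq`. In the equality case `γt + ⟪n, γx⟫` is constant, which
forces `‖γx'‖ = γt'`; moreover at the time `s` with `γt s = γt a + rp` the point `γx s` lies
in the closed balls of radius `rp` about `rp • n` and of radius `rq` about `-rq • n`, which
touch only at the origin.
-/

open Set
open scoped RealInnerProductSpace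

section CausalCurve

variable {E : Type*} [NormedAddCommGroup E] [InnerProductSpace ℝ E]

theorem real_inner_le_norm_of_norm_le_one {e : E} (he : ‖e‖ ≤ 1) (v : E) :
    ⟪e, v⟫ ≤ ‖v‖ :=
  (real_inner_le_norm e v).trans (mul_le_of_le_one_left (norm_nonneg v) he)

theorem eq_zero_of_norm_sub_smul_le_of_norm_add_smul_le {x n : E} {r r' : ℝ} (hn : ‖n‖ = 1)
    (hr : ‖x - r • n‖ ≤ r) (hr' : ‖x + r' • n‖ ≤ r') : x = 0 := by
  have hsq (c : ℝ) (hc : ‖x + c • n‖ ≤ |c|) : ‖x‖ ^ 2 ≤ -2 * c * ⟪x, n⟫ := by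
    have h := pow_le_pow_left₀ (norm_nonneg _) hc 2
    rw [norm_add_sq_real, real_inner_smul_right, norm_smul, hn, Real.norm_eq_abs] at h
    nlinarith
  have hr₀ := (norm_nonneg _).trans hr
  have hr'₀ := (norm_nonneg _).trans hr'
  have h₁ := hsq (-r) (by rwa [neg_smul, ← sub_eq_add_neg, abs_neg, abs_of_nonneg hr₀])
  have h₂ := hsq r' (by rwa [abs_of_nonneg hr'₀])
  have hx : ‖x‖ ^ 2 ≤ 0 := by rcases le_total 0 ⟪x, n⟫ with h | h <;> nlinarith
  simpa using hx

variable {γt : ℝ → ℝ} {γx : ℝ → E} {a b : ℝ}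

theorem hasDerivWithinAt_sub_inner {I : Set ℝ} (hdt : DifferentiableOn ℝ γt I)
    (hdx : DifferentiableOn ℝ γx I) (e : E) {s : ℝ} (hs : s ∈ I) :
    HasDerivWithinAt (fun τ => γt τ - ⟪e, γx τ⟫)
      (derivWithin γt I s - ⟪e, derivWithin γx I s⟫) I s :=
  (hdt s hs).hasDerivWithinAt.sub <| by
    simpa using (hasDerivWithinAt_const s I e).inner ℝ (hdx s hs).hasDerivWithinAt

variable (hdt : DifferentiableOn ℝ γt (Icc a b)) (hdx : DifferentiableOn ℝ γx (Icc a b))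
  (hcausal : ∀ s ∈ Icc a b, ‖derivWithin γx (Icc a b) s‖ ≤ derivWithin γt (Icc a b) s)
include hdt hdx hcausal

theorem monotoneOn_sub_inner_of_causal {e : E} (he : ‖e‖ ≤ 1) :
    MonotoneOn (fun τ => γt τ - ⟪e, γx τ⟫) (Icc a b) := by
  have hderiv s (hs : s ∈ Icc a b) := hasDerivWithinAt_sub_inner hdt hdx e hs
  refine monotoneOn_of_hasDerivWithinAt_nonneg (convex_Icc a b)
    (fun s hs => (hderiv s hs).continuousWithinAt)
    (fun s hs => (hderiv s (interior_subset hs)).mono interior_subset) fun s hs => ?_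
  linarith [hcausal s (interior_subset hs), real_inner_le_norm_of_norm_le_one he
    (derivWithin γx (Icc a b) s)]

theorem norm_sub_le_sub_of_causal {s t : ℝ} (hs : s ∈ Icc a b) (ht : t ∈ Icc a b)
    (hst : s ≤ t) : ‖γx t - γx s‖ ≤ γt t - γt s := by
  set v := γx t - γx s
  have he : ‖‖v‖⁻¹ • v‖ ≤ 1 := by
    rw [norm_smul, norm_inv, norm_norm]
    exact inv_mul_le_one
  have hinner : ⟪‖v‖⁻¹ • v, γx t⟫ - ⟪‖v‖⁻¹ • v, γx s⟫ = ‖v‖ := by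
    rw [← inner_sub_right, real_inner_smul_left, real_inner_self_eq_norm_sq]
    rcases eq_or_ne ‖v‖ 0 with h | h
    · simp [h]
    · field_simp
  linarith [monotoneOn_sub_inner_of_causal hdt hdx hcausal he hs ht hst]

theorem norm_derivWithin_eq_of_sub_inner_eq (hab : a ≤ b) {e : E} (he : ‖e‖ ≤ 1)
    (heq : γt a - ⟪e, γx a⟫ = γt b - ⟪e, γx b⟫) :
    ∀ s ∈ Icc a b, ‖derivWithin γx (Icc a b) s‖ = derivWithin γt (Icc a b) s := by
  intro s hs
  rcases hab.eq_or_lt with rfl | hlt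
  · rw [Icc_self] at hs ⊢
    have hiso : ¬AccPt s (Filter.principal {a}) := fun h =>
      Set.Infinite.of_accPt h (finite_singleton a)
    simp [derivWithin_zero_of_not_accPt hiso]
  set f := fun τ => γt τ - ⟪e, γx τ⟫
  have hmono := monotoneOn_sub_inner_of_causal hdt hdx hcausal he
  have hconst : EqOn f (fun _ => f a) (Icc a b) := fun t ht =>
    le_antisymm ((hmono ht (right_mem_Icc.2 hab) ht.2).trans_eq heq.symm)
      (hmono (left_mem_Icc.2 hab) ht ht.1)
  have hzero := (uniqueDiffOn_Icc hlt s hs).eq_deriv _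
    (hasDerivWithinAt_sub_inner hdt hdx e hs)
    ((hasDerivWithinAt_const s _ (f a)).congr hconst (hconst hs))
  linarith [hcausal s hs, real_inner_le_norm_of_norm_le_one he (derivWithin γx (Icc a b) s)]

end CausalCurve

/-- Time-of-flight bound in Minkowski space `ℝ^{1,3}` between antipodal spatial
directions: any future-directed causal curve from `p` (spatial position `rp • n`)
to `q` (spatial position `-rq • n`) satisfies `t(q) - t(p) ≥ rp + rq`, with
equality only for a null curve passing through the spatial origin. -/
theorem minkowski_antipodal_time_of_flight
    (γt : ℝ → ℝ) (γx : ℝ → EuclideanSpace ℝ (Fin 3)) (a b : ℝ) (hab : a ≤ b)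
    (hdt : DifferentiableOn ℝ γt (Set.Icc a b))
    (hdx : DifferentiableOn ℝ γx (Set.Icc a b))
    (hcausal : ∀ s ∈ Set.Icc a b,
      ‖derivWithin γx (Set.Icc a b) s‖ ≤ derivWithin γt (Set.Icc a b) s)
    (n : EuclideanSpace ℝ (Fin 3)) (hn : ‖n‖ = 1)
    (rp rq : ℝ) (hrp : 0 ≤ rp) (hrq : 0 ≤ rq)
    (hpa : γx a = rp • n) (hqb : γx b = (-rq) • n) :
    rp + rq ≤ γt b - γt a ∧
    (γt b - γt a = rp + rq →
      (∀ s ∈ Set.Icc a b,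
        ‖derivWithin γx (Set.Icc a b) s‖ = derivWithin γt (Set.Icc a b) s) ∧
      ∃ s ∈ Set.Icc a b, γx s = 0) := by
  have ha := left_mem_Icc.2 hab
  have hb := right_mem_Icc.2 hab
  have hsep : ‖γx b - γx a‖ = rp + rq := by
    rw [hpa, hqb, ← sub_smul, norm_smul, hn, mul_one, Real.norm_eq_abs,
      abs_of_nonpos (by linarith)]
    ring
  refine ⟨hsep ▸ norm_sub_le_sub_of_causal hdt hdx hcausal ha hb hab, fun heq => ⟨?_, ?_⟩⟩
  · refine norm_derivWithin_eq_of_sub_inner_eq hdt hdx hcausal hab (e := -n)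
      (by rw [norm_neg, hn]) ?_
    simp only [hpa, hqb, inner_neg_left, real_inner_smul_right, real_inner_self_eq_norm_sq, hn]
    linarith
  · obtain ⟨s, hs, hts⟩ := intermediate_value_Icc hab hdt.continuousOn
      (show γt a + rp ∈ Icc (γt a) (γt b) by constructor <;> linarith)
    have hp := norm_sub_le_sub_of_causal hdt hdx hcausal ha hs hs.1
    have hq := norm_sub_le_sub_of_causal hdt hdx hcausal hs hb hs.2
    rw [hpa] at hp
    rw [hqb, norm_sub_rev, neg_smul, sub_neg_eq_add] at hq
    exact ⟨s, hs, eq_zero_of_norm_sub_smul_le_of_norm_add_smul_le (r := rp) (r' := rq) hn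
      (by linarith) (by linarith)⟩
end
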